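/- Assume the P-ideal dichotomy (PID). Let X be a topological space and let x ∈ X be both a Fréchet point and an α₁-point. Then t(x, X_δ) ≤ ω₁; moreover, for every A ⊆ X with x ∉ A such that x lies in the closure of A in the Gδ-modification X_δ, there is a transfinite sequence ⟨x_i : i < ω₁⟩ of elements of A converging to x in X_δ, i.e., every Gδ subset of X containing x contains a tail {x_i : j ≤ i < ω₁} for some j < ω₁. -/

import Mathlib

open Set Filter Topology

universe u v

noncomputable section

/-- The Gδ-modification of a topology: the topology generated by the Gδ subsets. -/
def gdeltaMod {X : Type*} (t : TopologicalSpace X) : TopologicalSpace X :=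
  TopologicalSpace.generateFrom {s : Set X | @IsGδ X t s}

/-- `x` is a Fréchet point: whenever `x ∈ cl A` there is a sequence in `A` converging to `x`. -/
def IsFrechetPt {X : Type*} (t : TopologicalSpace X) (x : X) : Prop :=
  ∀ A : Set X, x ∈ @closure X t A →
    ∃ u : ℕ → X, (∀ n, u n ∈ A) ∧ @Filter.Tendsto ℕ X u Filter.atTop (@nhds X t x)

/-- `x` is an α₁-point: given countably many sequences converging to `x`, there is a single
sequence converging to `x` whose range contains the range of each given one modulo finite. -/
def IsAlpha1Pt {X : Type*} (t : TopologicalSpace X) (x : X) : Prop :=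
  ∀ u : ℕ → ℕ → X, (∀ n, @Filter.Tendsto ℕ X (u n) Filter.atTop (@nhds X t x)) →
    ∃ v : ℕ → X, @Filter.Tendsto ℕ X v Filter.atTop (@nhds X t x) ∧
      ∀ n, (Set.range (u n) \ Set.range v).Finite

/-- A set `B` converges to `x`: every neighborhood of `x` contains all but finitely
many elements of `B`. -/
def SetConverges {X : Type*} (t : TopologicalSpace X) (B : Set X) (x : X) : Prop :=
  ∀ U ∈ @nhds X t x, (B \ U).Finite

/-- Tightness of the space is at most κ. -/
def tightnessLe (X : Type u) (t : TopologicalSpace X) (κ : Cardinal.{u}) : Prop :=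
  ∀ (x : X) (A : Set X), x ∈ @closure X t A →
    ∃ B : Set X, B ⊆ A ∧ Cardinal.mk ↥B ≤ κ ∧ x ∈ @closure X t B

/-- The tightness `t(X)`: the least infinite cardinal κ such that whenever `x ∈ cl A`
there is `B ⊆ A` with `|B| ≤ κ` and `x ∈ cl B`. -/
def tightness (X : Type u) (t : TopologicalSpace X) : Cardinal.{u} :=
  sInf {κ : Cardinal.{u} | Cardinal.aleph0 ≤ κ ∧ tightnessLe X t κ}

/-- The tightness `t(x, X)` of a point. -/
def tightnessPt {X : Type u} (t : TopologicalSpace X) (x : X) : Cardinal.{u} :=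
  sInf {κ : Cardinal.{u} | Cardinal.aleph0 ≤ κ ∧
    ∀ A : Set X, x ∈ @closure X t A →
      ∃ B : Set X, B ⊆ A ∧ Cardinal.mk ↥B ≤ κ ∧ x ∈ @closure X t B}
/-- `I` is a P-ideal on the set (type) `S`: an ideal of countable subsets of `S` containing
all finite sets, such that every countable subfamily has a pseudo-union in the ideal. -/
def IsPIdeal {S : Type u} (I : Set (Set S)) : Prop :=
  (∀ A ∈ I, A.Countable) ∧
  (∀ A ∈ I, ∀ B : Set S, B ⊆ A → B ∈ I) ∧
  (∀ A ∈ I, ∀ B ∈ I, A ∪ B ∈ I) ∧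
  (∀ A : Set S, A.Finite → A ∈ I) ∧
  (∀ A : ℕ → Set S, (∀ n, A n ∈ I) → ∃ B ∈ I, ∀ n, (A n \ B).Finite)

/-- The P-ideal dichotomy: for every P-ideal `I` on a set `S`, either there is an uncountable
`Y ⊆ S` all of whose countable subsets lie in `I`, or `S` is a countable union of sets
each containing no infinite member of `I`. -/
def PIdealDichotomy : Prop :=
  ∀ (S : Type u) (I : Set (Set S)), IsPIdeal I →
    (∃ Y : Set S, ¬ Y.Countable ∧ ∀ Z : Set S, Z ⊆ Y → Z.Countable → Z ∈ I) ∨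
    (∃ Y : ℕ → Set S, (⋃ n, Y n) = Set.univ ∧
      ∀ n, ∀ Z ∈ I, Z.Infinite → ¬ Z ⊆ Y n)

section Aux

variable {X : Type u} {t : TopologicalSpace X} {x : X}

lemma isOpen_gdeltaMod {S : Set X} (h : @IsGδ X t S) : @IsOpen X (gdeltaMod t) S :=
  TopologicalSpace.isOpen_generateFrom_of_mem h

lemma gdelta_basis (t : TopologicalSpace X) :
    @TopologicalSpace.IsTopologicalBasis X (gdeltaMod t) {s : Set X | @IsGδ X t s} := by
  refine @TopologicalSpace.IsTopologicalBasis.mk X (gdeltaMod t) _ ?_ ?_ rfl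
  · intro t₁ h₁ t₂ h₂ y hy
    exact ⟨t₁ ∩ t₂, h₁.inter h₂, hy, subset_rfl⟩
  · apply Set.eq_univ_of_univ_subset
    intro y _
    exact ⟨univ, IsGδ.univ, mem_univ y⟩

lemma mem_gdeltaMod_closure_iff {B : Set X} :
    x ∈ @closure X (gdeltaMod t) B ↔
      ∀ S : Set X, @IsGδ X t S → x ∈ S → (S ∩ B).Nonempty := by
  constructor
  · intro h S hS hxS
    exact (@mem_closure_iff X (gdeltaMod t) x B).mp h S (isOpen_gdeltaMod hS) hxS
  · intro h
    rw [@mem_closure_iff_nhds X (gdeltaMod t) x B]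
    intro N hN
    obtain ⟨S, hS, hxS, hSN⟩ :=
      (@TopologicalSpace.IsTopologicalBasis.mem_nhds_iff X (gdeltaMod t) x N _
        (gdelta_basis t)).mp hN
    obtain ⟨y, hyS, hyB⟩ := h S hS hxS
    exact ⟨y, hSN hyS, hyB⟩

lemma setConverges_range {v : ℕ → X} (hv : @Tendsto ℕ X v atTop (@nhds X t x)) :
    SetConverges t (range v) x := by
  intro U hU
  have h1 : {k : ℕ | v k ∉ U}.Finite := by
    have h2 : v ⁻¹' U ∈ atTop := hv hU
    obtain ⟨N, hN⟩ := mem_atTop_sets.mp h2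
    refine (Set.finite_Iio N).subset ?_
    intro k hk
    by_contra hk'
    exact hk (hN k (le_of_not_gt hk'))
  refine (h1.image v).subset ?_
  rintro y ⟨⟨k, rfl⟩, hyU⟩
  exact ⟨k, hyU, rfl⟩

lemma tendsto_of_injective_range {u : ℕ → X} (hinj : Function.Injective u)
    (hconv : SetConverges t (range u) x) : @Tendsto ℕ X u atTop (@nhds X t x) := by
  rw [← Nat.cofinite_eq_atTop]
  intro U hU
  rw [mem_map, mem_cofinite]
  have heq : (u ⁻¹' U)ᶜ = u ⁻¹' (range u \ U) := by
    ext k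
    simp [mem_preimage]
  rw [heq]
  exact Set.Finite.preimage hinj.injOn (hconv U hU)

lemma exists_enum {C : Set X} (hc : C.Countable) (hi : C.Infinite) :
    ∃ u : ℕ → X, Function.Injective u ∧ range u = C := by
  obtain ⟨d⟩ := (Set.countable_infinite_iff_nonempty_denumerable).mp ⟨hc, hi⟩
  refine ⟨fun n => ((Denumerable.eqv ↥C).symm n : X), ?_, ?_⟩
  · exact Subtype.val_injective.comp (Denumerable.eqv ↥C).symm.injective
  · have : (range fun n => ((Denumerable.eqv ↥C).symm n : X)) =
        Subtype.val '' (range (Denumerable.eqv ↥C).symm) := by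
      rw [← Set.range_comp]; rfl
    rw [this, (Denumerable.eqv ↥C).symm.surjective.range_eq, Set.image_univ, Subtype.range_coe]

variable (t x) in
/-- The ideal of countable subsets of `A` converging to `x`. -/
def convIdeal (A : Set X) : Set (Set ↥A) :=
  {C : Set ↥A | C.Countable ∧ SetConverges t (Subtype.val '' C) x}

lemma convIdeal_isPIdeal (hAlpha1 : IsAlpha1Pt t x) (A : Set X) :
    IsPIdeal (convIdeal t x A) := by
  refine ⟨fun C hC => hC.1, ?_, ?_, ?_, ?_⟩
  · intro C hC B hBC
    refine ⟨hC.1.mono hBC, fun U hU => (hC.2 U hU).subset ?_⟩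
    exact diff_subset_diff_left (image_mono hBC)
  · intro C hC D hD
    refine ⟨hC.1.union hD.1, fun U hU => ?_⟩
    rw [image_union, union_diff_distrib]
    exact (hC.2 U hU).union (hD.2 U hU)
  · intro C hC
    exact ⟨hC.countable, fun U hU => (hC.image _).subset diff_subset⟩
  · intro Aseq hAseq
    have hu : ∀ n : ℕ, ∃ u : ℕ → X, @Tendsto ℕ X u atTop (@nhds X t x) ∧
        (Subtype.val '' Aseq n \ range u).Finite := by
      intro n
      by_cases hfin : (Subtype.val '' Aseq n).Finite
      · exact ⟨fun _ => x, tendsto_const_nhds, hfin.subset diff_subset⟩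
      · obtain ⟨u, huinj, hurange⟩ := exists_enum ((hAseq n).1.image _) hfin
        refine ⟨u, tendsto_of_injective_range huinj (hurange ▸ (hAseq n).2), ?_⟩
        rw [hurange]
        simp
    choose u hut hud using hu
    obtain ⟨v, hvt, hvd⟩ := hAlpha1 u hut
    refine ⟨{a : ↥A | (a : X) ∈ range v}, ⟨?_, ?_⟩, ?_⟩
    · exact (countable_range v).preimage Subtype.val_injective
    · intro U hU
      refine ((setConverges_range hvt) U hU).subset ?_
      rintro y ⟨⟨a, ha1, rfl⟩, hyU⟩
      exact ⟨ha1, hyU⟩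
    · intro n
      have himg : Subtype.val '' (Aseq n \ {a : ↥A | (a : X) ∈ range v}) ⊆
          (Subtype.val '' Aseq n \ range (u n)) ∪ (range (u n) \ range v) := by
        rintro y ⟨a, ⟨ha1, ha2⟩, rfl⟩
        by_cases hy : (a : X) ∈ range (u n)
        · exact Or.inr ⟨hy, ha2⟩
        · exact Or.inl ⟨mem_image_of_mem _ ha1, hy⟩
      have hfin : (Subtype.val '' (Aseq n \ {a : ↥A | (a : X) ∈ range v})).Finite :=
        ((hud n).union (hvd n)).subset himg
      exact hfin.of_finite_image Subtype.val_injective.injOn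

lemma countable_Iic_of_lt_ord {w : Ordinal.{u}} (hw : w < (Cardinal.aleph 1).ord) :
    (Set.Iic w).Countable := by
  have h1 : Order.succ w < (Cardinal.aleph 1).ord :=
    (Cardinal.isSuccLimit_ord (Cardinal.aleph0_le_aleph 1)).succ_lt hw
  have h2 : (Order.succ w).card ≤ Cardinal.aleph0 := by
    have h3 := Cardinal.lt_ord.mp h1
    rwa [← Cardinal.succ_aleph0, Order.lt_succ_iff] at h3
  have h4 : Cardinal.mk (Set.Iic w) ≤ Cardinal.aleph0 := by
    have hsub : Set.Iic w ⊆ Set.Iio (Order.succ w) := by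
      intro z hz
      exact Order.lt_succ_iff.mpr (Set.mem_Iic.mp hz)
    calc Cardinal.mk (Set.Iic w) ≤ Cardinal.mk (Set.Iio (Order.succ w)) :=
          Cardinal.mk_le_mk_of_subset hsub
      _ = Cardinal.lift.{u+1} (Order.succ w).card := Ordinal.mk_Iio_ordinal _
      _ ≤ Cardinal.lift.{u+1} Cardinal.aleph0 := Cardinal.lift_le.mpr h2
      _ = Cardinal.aleph0 := Cardinal.lift_aleph0
  exact Set.countable_coe_iff.mp (Cardinal.mk_le_aleph0_iff.mp h4)

lemma not_countable_Iio_ord : ¬ (Set.Iio (Cardinal.aleph 1).ord : Set Ordinal.{u}).Countable := by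
  intro h
  have h1 : Cardinal.mk (Set.Iio (Cardinal.aleph 1).ord : Set Ordinal.{u}) ≤ Cardinal.aleph0 :=
    Cardinal.mk_le_aleph0_iff.mpr (Set.countable_coe_iff.mpr h)
  rw [Ordinal.mk_Iio_ordinal, Cardinal.card_ord] at h1
  have h2 : Cardinal.lift.{u+1} (Cardinal.aleph 1) ≤ Cardinal.lift.{u+1} Cardinal.aleph0 := by
    rwa [Cardinal.lift_aleph0]
  exact absurd (Cardinal.lift_le.mp h2) (not_le.mpr Cardinal.aleph0_lt_aleph_one)

lemma zero_lt_ord_aleph_one : (0 : Ordinal.{u}) < (Cardinal.aleph 1).ord := by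
  rw [Cardinal.lt_ord, Ordinal.card_zero]
  exact Cardinal.aleph0_pos.trans Cardinal.aleph0_lt_aleph_one

/-- The key lemma: the ω₁-sequence exists. -/
lemma key_lemma (hPID : PIdealDichotomy.{u}) {X : Type u} [t : TopologicalSpace X]
    {x : X} (hFrechet : IsFrechetPt t x) (hAlpha1 : IsAlpha1Pt t x)
    (A : Set X) (hcl : x ∈ @closure X (gdeltaMod t) A) :
    ∃ f : Ordinal.{u} → X,
      (∀ i < (Cardinal.aleph 1).ord, f i ∈ A) ∧
      ∀ S : Set X, @IsGδ X t S → x ∈ S →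
        ∃ j < (Cardinal.aleph 1).ord,
          ∀ i, j ≤ i → i < (Cardinal.aleph 1).ord → f i ∈ S := by
  by_cases hy : ∃ y ∈ A, ∀ U : Set X, IsOpen U → x ∈ U → y ∈ U
  · -- a point of `A` belongs to every neighborhood of `x`: constant sequence works
    obtain ⟨y, hyA, hyall⟩ := hy
    refine ⟨fun _ => y, fun i _ => hyA, ?_⟩
    rintro S ⟨T, hTo, hTc, rfl⟩ hxS
    refine ⟨0, zero_lt_ord_aleph_one, fun i _ _ => ?_⟩
    rw [mem_sInter]
    intro U hU
    exact hyall U (hTo U hU) (mem_sInter.mp hxS U hU)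
  · push_neg at hy
    rcases hPID ↥A (convIdeal t x A) (convIdeal_isPIdeal hAlpha1 A) with
      ⟨Y, hYunc, hYI⟩ | ⟨Yn, hYcov, hYbad⟩
    · -- uncountable homogeneous case
      have hle : Cardinal.mk ((Cardinal.aleph 1).ord.ToType) ≤ Cardinal.mk ↥Y := by
        rw [Cardinal.mk_ord_toType]
        exact le_of_not_gt (fun h => hYunc ((Cardinal.countable_iff_lt_aleph_one Y).mpr h))
      obtain ⟨φ⟩ := (Cardinal.le_def _ _).mp hle
      set o := (Cardinal.aleph 1).ord with ho
      set e := Ordinal.ToType.mk (o := o) with he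
      set g : o.ToType → X := fun a => ((φ a : ↥A) : X) with hg
      set f : Ordinal.{u} → X := fun i => if h : i < o then g (e ⟨i, h⟩) else x with hfdef
      have hfval : ∀ (i : Ordinal.{u}) (h : i < o), f i = g (e ⟨i, h⟩) := fun i h => dif_pos h
      refine ⟨f, ?_, ?_⟩
      · intro i hi
        rw [hfval i hi]
        exact ((φ (e ⟨i, hi⟩) : ↥A)).2
      · intro S hS hxS
        by_contra hcon
        push_neg at hcon
        obtain ⟨T, hTo, hTc, hTeq⟩ := hS
        have hUbig : ∃ U ∈ T, {i : Ordinal.{u} | i < o ∧ f i ∉ U}.Infinite := by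
          by_contra hfin
          push_neg at hfin
          have hWc : {i : Ordinal.{u} | i < o ∧ f i ∉ S}.Countable := by
            have hsub : {i : Ordinal.{u} | i < o ∧ f i ∉ S} ⊆
                ⋃ U ∈ T, {i : Ordinal.{u} | i < o ∧ f i ∉ U} := by
              rintro i ⟨hio, hiS⟩
              have hex : ∃ U ∈ T, f i ∉ U := by
                by_contra hall
                push_neg at hall
                refine hiS ?_
                rw [hTeq, mem_sInter]
                exact hall
              obtain ⟨U, hUT, hiU⟩ := hex
              exact mem_biUnion hUT ⟨hio, hiU⟩
            exact ((hTc.biUnion fun U hU =>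
              (hfin U hU).countable)).mono hsub
          have hcov : Set.Iio o ⊆ ⋃ w ∈ {i : Ordinal.{u} | i < o ∧ f i ∉ S}, Set.Iic w := by
            intro j hj
            obtain ⟨i, hji, hio, hiS⟩ := hcon j hj
            exact mem_biUnion (⟨hio, hiS⟩ : _ ∧ _) hji
          exact not_countable_Iio_ord
            (((hWc.biUnion fun w hw => countable_Iic_of_lt_ord hw.1)).mono hcov)
        obtain ⟨U, hUT, hUinf⟩ := hUbig
        have hUo : IsOpen U := hTo U hUT
        have hxU : x ∈ U := by
          rw [hTeq, mem_sInter] at hxS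
          exact hxS U hUT
        set emb := hUinf.natEmbedding with hemb
        set z : ℕ → ↥A := fun k => ((φ (e ⟨(emb k : Ordinal.{u}), (emb k).2.1⟩)) : ↥A) with hz
        have hzval : ∀ k, (z k : X) = f ((emb k : Ordinal.{u})) := by
          intro k
          rw [hfval _ (emb k).2.1]
        have hznotU : ∀ k, (z k : X) ∉ U := by
          intro k
          rw [hzval k]
          exact (emb k).2.2
        have hzinj : Function.Injective z := by
          intro a b hab
          apply emb.injective
          have h1 : φ (e ⟨(emb a : Ordinal.{u}), (emb a).2.1⟩) =
              φ (e ⟨(emb b : Ordinal.{u}), (emb b).2.1⟩) := Subtype.val_injective hab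
          have h2 := e.injective (φ.injective h1)
          exact Subtype.val_injective (Subtype.mk_eq_mk.mp h2)
        have hZsub : range z ⊆ Y := by
          rintro a ⟨k, rfl⟩
          exact (φ (e ⟨(emb k : Ordinal.{u}), (emb k).2.1⟩)).2
        have hZI : range z ∈ convIdeal t x A := hYI _ hZsub (countable_range z)
        have hconv : (Subtype.val '' range z \ U).Finite := hZI.2 U (hUo.mem_nhds hxU)
        have hsubAll : Subtype.val '' range z ⊆ Subtype.val '' range z \ U := by
          rintro y ⟨a, ⟨k, rfl⟩, rfl⟩
          exact ⟨⟨z k, ⟨k, rfl⟩, rfl⟩, hznotU k⟩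
        have hinf2 : (Subtype.val '' range z).Infinite := by
          have heq2 : Subtype.val '' range z = range (fun k => (z k : X)) := by
            rw [← Set.range_comp]
            rfl
          rw [heq2]
          exact Set.infinite_range_of_injective (Subtype.val_injective.comp hzinj)
        exact hinf2 (hconv.subset hsubAll)
    · -- covering case: contradiction with `x` in the Gδ-closure of `A`
      exfalso
      have hclosed : ∀ n, x ∉ @closure X t (Subtype.val '' Yn n) := by
        intro n hxcl
        obtain ⟨w, hwmem, hwt⟩ := hFrechet _ hxcl
        by_cases hrf : (range w).Finite
        · haveI : Finite ↥(range w) := hrf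
          obtain ⟨⟨y, hyr⟩, hfib⟩ := Finite.exists_infinite_fiber
            (fun k => (⟨w k, mem_range_self k⟩ : ↥(range w)))
          have hyA : y ∈ A := by
            obtain ⟨k, rfl⟩ := hyr
            obtain ⟨a, _, ha⟩ := hwmem k
            exact ha ▸ a.2
          obtain ⟨U, hUo, hxU, hyU⟩ := hy y hyA
          have hev : ∀ᶠ k in atTop, w k ∈ U := hwt (hUo.mem_nhds hxU)
          obtain ⟨N, hN⟩ := eventually_atTop.mp hev
          have hfibset : ((fun k => (⟨w k, mem_range_self k⟩ : ↥(range w))) ⁻¹'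
              {⟨y, hyr⟩}).Infinite := Set.infinite_coe_iff.mp hfib
          obtain ⟨k, hkmem, hkN⟩ := hfibset.exists_gt N
          have hwk : w k = y := congrArg Subtype.val (Set.mem_singleton_iff.mp hkmem)
          exact hyU (hwk ▸ hN k hkN.le)
        · set Z := {a : ↥A | a ∈ Yn n ∧ (a : X) ∈ range w} with hZdef
          have hsub : range w ⊆ Subtype.val '' Z := by
            rintro y ⟨k, rfl⟩
            obtain ⟨a, haY, ha⟩ := hwmem k
            exact ⟨a, ⟨haY, ha ▸ mem_range_self k⟩, ha⟩
          have hZI : Z ∈ convIdeal t x A := by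
            constructor
            · exact (((countable_range w).preimage Subtype.val_injective)).mono
                (fun a ha => ha.2)
            · intro U hU
              refine ((setConverges_range hwt) U hU).subset ?_
              rintro p ⟨⟨a, ha, rfl⟩, hpU⟩
              exact ⟨ha.2, hpU⟩
          have hZinf : Z.Infinite := by
            have h1 : (Subtype.val '' Z).Infinite := Set.Infinite.mono hsub hrf
            exact Set.Infinite.of_image _ h1
          exact hYbad n Z hZI hZinf (fun a ha => ha.1)
      set G := ⋂ n, (@closure X t (Subtype.val '' Yn n))ᶜ with hGdef
      have hGδ : @IsGδ X t G :=
        IsGδ.iInter (fun n => (isClosed_closure.isOpen_compl).isGδ)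
      have hxG : x ∈ G := mem_iInter.mpr (fun n => hclosed n)
      have hGA : G ∩ A = ∅ := by
        ext a
        simp only [mem_inter_iff, mem_empty_iff_false, iff_false, not_and]
        intro haG haA
        have hcov : (⟨a, haA⟩ : ↥A) ∈ ⋃ n, Yn n := by
          rw [hYcov]
          trivial
        obtain ⟨n, hn⟩ := mem_iUnion.mp hcov
        have haY : a ∈ Subtype.val '' Yn n := ⟨⟨a, haA⟩, hn, rfl⟩
        have := mem_iInter.mp haG n
        exact this (subset_closure haY)
      obtain ⟨p, hpG, hpA⟩ := (@mem_closure_iff X (gdeltaMod t) x A).mp hcl G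
        (isOpen_gdeltaMod hGδ) hxG
      rw [← mem_empty_iff_false p, ← hGA]
      exact ⟨hpG, hpA⟩

end Aux

/-- PID implies that for every Fréchet α₁-point `x` of a space `X`,
the tightness of `x` in the Gδ-modification is at most `ω₁`; moreover for every `A` with
`x ∉ A` whose Gδ-closure contains `x` there is an `ω₁`-sequence of elements of `A`
converging to `x` in the Gδ-modification. -/
theorem statement1 (hPID : PIdealDichotomy.{u}) (X : Type u) (t : TopologicalSpace X)
    (x : X) (hFrechet : IsFrechetPt t x) (hAlpha1 : IsAlpha1Pt t x) :
    tightnessPt (gdeltaMod t) x ≤ Cardinal.aleph 1 ∧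
    ∀ A : Set X, x ∉ A → x ∈ @closure X (gdeltaMod t) A →
      ∃ f : Ordinal.{u} → X,
        (∀ i < (Cardinal.aleph 1).ord, f i ∈ A) ∧
        ∀ S : Set X, @IsGδ X t S → x ∈ S →
          ∃ j < (Cardinal.aleph 1).ord,
            ∀ i, j ≤ i → i < (Cardinal.aleph 1).ord → f i ∈ S := by
  constructor
  · apply csInf_le'
    refine ⟨Cardinal.aleph0_le_aleph 1, ?_⟩
    intro A hclA
    by_cases hxA : x ∈ A
    · refine ⟨{x}, singleton_subset_iff.mpr hxA, ?_, ?_⟩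
      · rw [Cardinal.mk_singleton]
        exact le_trans Cardinal.one_le_aleph0 (Cardinal.aleph0_le_aleph 1)
      · exact @subset_closure X (gdeltaMod t) {x} x (mem_singleton x)
    · obtain ⟨f, hfA, hfS⟩ := key_lemma hPID (t := t) hFrechet hAlpha1 A hclA
      set e := Ordinal.ToType.mk (o := (Cardinal.aleph 1).ord) with he
      refine ⟨range (fun a : (Cardinal.aleph 1).ord.ToType => f ((e.symm a : ↑(Set.Iio (Cardinal.aleph 1).ord)) : Ordinal.{u})), ?_, ?_, ?_⟩
      · rintro y ⟨a, rfl⟩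
        exact hfA _ (e.symm a).2
      · exact le_trans Cardinal.mk_range_le (le_of_eq (Cardinal.mk_ord_toType _))
      · rw [mem_gdeltaMod_closure_iff]
        intro S hS hxS
        obtain ⟨j, hj, htail⟩ := hfS S hS hxS
        refine ⟨f j, htail j le_rfl hj, ⟨e ⟨j, hj⟩, ?_⟩⟩
        show f ((e.symm (e ⟨j, hj⟩) : ↑(Set.Iio (Cardinal.aleph 1).ord)) : Ordinal.{u}) = f j
        rw [OrderIso.symm_apply_apply]
  · intro A _ hclA
    exact key_lemma hPID (t := t) hFrechet hAlpha1 A hclA
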